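/- Let A be a unital ℂ-algebra with invertible elements u, v, and let ⟨⟨-,-⟩⟩ be a double bracket on A satisfying ⟨⟨v,v⟩⟩ = (1/2)(v²⊗1 − 1⊗v²), ⟨⟨u,u⟩⟩ = −(1/2)(u²⊗1 − 1⊗u²), and ⟨⟨v,u⟩⟩ = (1/2)(uv⊗1 + 1⊗vu − v⊗u + u⊗v). Fix λ ∈ ℂ and set h_λ = u + v + u⁻¹ + v⁻¹ + λ(u⁻¹v⁻¹ + vu). Then, with m : A⊗A → A the multiplication map, the modified Kontsevich flow is given by m(⟨⟨h_λ, u⟩⟩) = uv − uv⁻¹ − λv⁻¹ + λuvu and m(⟨⟨h_λ, v⟩⟩) = vu⁻¹ − vu + λu⁻¹ − λvuv. -/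
import Mathlib


open TensorProduct

noncomputable section

namespace Stmt17

variable {A : Type*} [Ring A] [Algebra ℂ A]

/-- The flip `(c ⊗ d)^∘ = d ⊗ c` on `A ⊗[ℂ] A`. -/
def flipT : A ⊗[ℂ] A →ₗ[ℂ] A ⊗[ℂ] A := (TensorProduct.comm ℂ A A).toLinearMap

/-- The outer bimodule structure `a ⬝ (d' ⊗ d'') ⬝ b = (a d') ⊗ (d'' b)`. -/
def outerAct (a b : A) : A ⊗[ℂ] A →ₗ[ℂ] A ⊗[ℂ] A :=
  TensorProduct.map (LinearMap.mulLeft ℂ a) (LinearMap.mulRight ℂ b)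

/-- The inner bimodule structure `a ∗ (d' ⊗ d'') ∗ b = (d' b) ⊗ (a d'')`. -/
def innerAct (a b : A) : A ⊗[ℂ] A →ₗ[ℂ] A ⊗[ℂ] A :=
  TensorProduct.map (LinearMap.mulRight ℂ b) (LinearMap.mulLeft ℂ a)

/-- Axioms of a double bracket on `A`. -/
structure IsDoubleBracket (br : A →ₗ[ℂ] A →ₗ[ℂ] A ⊗[ℂ] A) : Prop where
  cyclic : ∀ a b : A, br a b = - flipT (br b a)
  right_der : ∀ a b c : A, br a (b * c) = outerAct 1 c (br a b) + outerAct b 1 (br a c)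
  left_der : ∀ a b c : A, br (b * c) a = innerAct 1 c (br b a) + innerAct b 1 (br c a)

/-- The modified Kontsevich Hamiltonian `h_λ = u + v + u⁻¹ + v⁻¹ + λ(u⁻¹ v⁻¹ + v u)`. -/
def kontH (u v : Aˣ) (l : ℂ) : A :=
  (u : A) + (v : A) + ((u⁻¹ : Aˣ) : A) + ((v⁻¹ : Aˣ) : A)
    + l • (((u⁻¹ : Aˣ) : A) * ((v⁻¹ : Aˣ) : A) + (v : A) * (u : A))


lemma innerAct_tmul (a b x y : A) : innerAct a b (x ⊗ₜ[ℂ] y) = (x * b) ⊗ₜ[ℂ] (a * y) := rfl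

lemma flipT_tmul (x y : A) : flipT (x ⊗ₜ[ℂ] y) = y ⊗ₜ[ℂ] x := rfl

lemma innerAct_one_one (z : A ⊗[ℂ] A) : innerAct (1 : A) 1 z = z := by
  have h : innerAct (1 : A) 1 = (LinearMap.id : A ⊗[ℂ] A →ₗ[ℂ] A ⊗[ℂ] A) := by
    apply TensorProduct.ext'
    intro x y
    simp [innerAct]
  rw [h]; rfl

lemma innerAct_innerAct (a b c d : A) (z : A ⊗[ℂ] A) :
    innerAct a b (innerAct c d z) = innerAct (a * c) (d * b) z := by
  have h : (innerAct a b).comp (innerAct c d) = innerAct (a * c) (d * b) := by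
    apply TensorProduct.ext'
    intro x y
    simp [innerAct, mul_assoc]
  exact DFunLike.congr_fun h z

lemma br_one (br : A →ₗ[ℂ] A →ₗ[ℂ] A ⊗[ℂ] A) (hbr : IsDoubleBracket br) (a : A) :
    br 1 a = 0 := by
  have h := hbr.left_der a 1 1
  rw [one_mul] at h
  rw [innerAct_one_one] at h
  exact left_eq_add.mp h

lemma br_inv (br : A →ₗ[ℂ] A →ₗ[ℂ] A ⊗[ℂ] A) (hbr : IsDoubleBracket br) (w : Aˣ) (a : A) :
    br ((w⁻¹ : Aˣ) : A) a
      = - innerAct ((w⁻¹ : Aˣ) : A) ((w⁻¹ : Aˣ) : A) (br (w : A) a) := by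
  have h := hbr.left_der a ((w⁻¹ : Aˣ) : A) (w : A)
  rw [Units.inv_mul, br_one br hbr a] at h
  have h2 := congrArg (innerAct (1 : A) ((w⁻¹ : Aˣ) : A)) h
  simp only [map_zero, map_add, innerAct_innerAct, one_mul, mul_one, Units.mul_inv,
    innerAct_one_one] at h2
  exact eq_neg_of_add_eq_zero_left h2.symm

/-- The modified Kontsevich flow: `m(⟨⟨h_λ, u⟩⟩) = uv − uv⁻¹ − λv⁻¹ + λuvu`
and `m(⟨⟨h_λ, v⟩⟩) = vu⁻¹ − vu + λu⁻¹ − λvuv`. -/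
theorem kontsevich_flow
    (br : A →ₗ[ℂ] A →ₗ[ℂ] A ⊗[ℂ] A) (hbr : IsDoubleBracket br)
    (u v : Aˣ)
    (hvv : br (v : A) (v : A)
      = (2 : ℂ)⁻¹ • (((v : A) * v) ⊗ₜ[ℂ] (1 : A) - (1 : A) ⊗ₜ[ℂ] ((v : A) * v)))
    (huu : br (u : A) (u : A)
      = -((2 : ℂ)⁻¹ • (((u : A) * u) ⊗ₜ[ℂ] (1 : A) - (1 : A) ⊗ₜ[ℂ] ((u : A) * u))))
    (hvu : br (v : A) (u : A)
      = (2 : ℂ)⁻¹ • (((u : A) * v) ⊗ₜ[ℂ] (1 : A) + (1 : A) ⊗ₜ[ℂ] ((v : A) * u)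
          - (v : A) ⊗ₜ[ℂ] (u : A) + (u : A) ⊗ₜ[ℂ] (v : A)))
    (l : ℂ) :
    LinearMap.mul' ℂ A (br (kontH u v l) (u : A))
      = (u : A) * v - (u : A) * ((v⁻¹ : Aˣ) : A)
        - l • ((v⁻¹ : Aˣ) : A) + l • ((u : A) * v * u) ∧
    LinearMap.mul' ℂ A (br (kontH u v l) (v : A))
      = (v : A) * ((u⁻¹ : Aˣ) : A) - (v : A) * u
        + l • ((u⁻¹ : Aˣ) : A) - l • ((v : A) * u * v) := by
  refine ⟨?_, ?_⟩
  · simp only [kontH, map_add, map_smul, LinearMap.add_apply, LinearMap.smul_apply]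
    rw [hbr.left_der (u : A) ((u⁻¹ : Aˣ) : A) ((v⁻¹ : Aˣ) : A),
        hbr.left_der (u : A) (v : A) (u : A),
        br_inv br hbr u (u : A), br_inv br hbr v (u : A), huu, hvu]
    simp only [map_neg, map_smul, map_sub, map_add, innerAct_tmul, innerAct_innerAct,
      LinearMap.mul'_apply, smul_add, smul_sub, smul_neg,
      Units.mul_inv_cancel_right, Units.inv_mul_cancel_right,
      Units.mul_inv_cancel_left, Units.inv_mul_cancel_left,
      Units.mul_inv, Units.inv_mul, one_mul, mul_one, mul_assoc]
    module
  · have huv : br (u : A) (v : A) = - flipT (br (v : A) (u : A)) := hbr.cyclic _ _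
    rw [hvu] at huv
    simp only [kontH, map_add, map_smul, LinearMap.add_apply, LinearMap.smul_apply]
    rw [hbr.left_der (v : A) ((u⁻¹ : Aˣ) : A) ((v⁻¹ : Aˣ) : A),
        hbr.left_der (v : A) (v : A) (u : A),
        br_inv br hbr u (v : A), br_inv br hbr v (v : A), huv, hvv]
    simp only [map_neg, map_smul, map_sub, map_add, innerAct_tmul, innerAct_innerAct,
      flipT_tmul, LinearMap.mul'_apply, smul_add, smul_sub, smul_neg, neg_neg,
      Units.mul_inv_cancel_right, Units.inv_mul_cancel_right,
      Units.mul_inv_cancel_left, Units.inv_mul_cancel_left,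
      Units.mul_inv, Units.inv_mul, one_mul, mul_one, mul_assoc]
    module

end Stmt17
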